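/- arXiv:1912.04503 — 2 statements merged into one kernel-verified Lean document; each statement's English description precedes it below -/
import Mathlib

section
/- For all integers n ≥ 1, d ≥ 2 and all integers i, k with 0 ≤ i ≤ k ≤ nd, i ≢ 0 (mod d) and k ≢ 0 (mod d), the arithmetic Hodge sums satisfy H_i ≤ H_k. -/
/-!
Counting the tuples `u ∈ [1, d-1]^n` by the quotient `(i - ∑ u) / d` identifies `H_i` with the
number of such `u` with `∑ u ≤ i` and `∑ u ≡ i (mod d)`; splitting off the first coordinate then
gives `H^{(n+1)}_i = ∑_{x=1}^{d-1} H^{(n)}_{i-x}`.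

By induction on `n`, `H` is monotone on the multiples of `d` and on the non-multiples separately.
Below a multiple of `d` the window `i-1, …, i-d+1` consists of non-multiples. Below a non-multiple
`i` it contains exactly one multiple, `i - (i mod d)`, and a cyclic shift of `[1, d-1]` sending
`i mod d` to `k mod d` pairs every term of the window below `i` with a term of the window below
`k ≥ i` that is of the same kind and has no smaller index.
-/

/-- The Hodge number `h_j` of the simplex `Simp(n,d)`. -/
noncomputable def hodge (n d : ℕ) (j : ℤ) : ℕ :=
  ((Fintype.piFinset fun _ : Fin n => Finset.Icc (1 : ℤ) ((d : ℤ) - 1)).filter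
    fun u => ∑ i, u i = j).card

/-- The arithmetic Hodge sum `H_i := Σ_{j=0}^{⌊i/d⌋} h_{i−jd}`, with `H_i = 0` for `i < 0`. -/
noncomputable def Hsum (n d : ℕ) (i : ℤ) : ℤ :=
  if i < 0 then 0
  else ∑ j ∈ Finset.range ((i / d).toNat + 1), (hodge n d (i - (j : ℤ) * d) : ℤ)

open Finset Fintype

theorem Finset.card_filter_piFinset_const_succ {α : Type*} [DecidableEq α] (s : Finset α)
    (n : ℕ) (P : (Fin (n + 1) → α) → Prop) [DecidablePred P] :
    #{u ∈ piFinset fun _ => s | P u} =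
      ∑ x ∈ s, #{r ∈ piFinset fun _ : Fin n => s | P (Fin.cons x r)} := by
  rw [card_eq_sum_card_fiberwise (f := fun u => u 0) (t := s) fun u hu => by simp_all]
  refine sum_congr rfl fun x hx => card_nbij' Fin.tail (fun r => Fin.cons x r) ?_ ?_ ?_ ?_
  · intro u hu
    simp only [coe_filter, Set.mem_ofPred_eq, mem_filter, Fin.mem_piFinset_iff_zero_tail] at hu ⊢
    obtain ⟨⟨⟨-, htail⟩, hP⟩, rfl⟩ := hu
    exact ⟨htail, by rwa [Fin.cons_self_tail]⟩
  · intro r hr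
    simp only [coe_filter, Set.mem_ofPred_eq, mem_filter, Fin.mem_piFinset_iff_zero_tail,
      Fin.cons_zero, Fin.tail_cons] at hr ⊢
    exact ⟨⟨⟨hx, hr.1⟩, hr.2⟩, trivial⟩
  · intro u hu
    obtain ⟨-, rfl⟩ := mem_filter.1 hu
    exact Fin.cons_self_tail u
  · intro r _
    exact Fin.tail_cons _ _

theorem sum_nonneg_of_mem_piFinset_Icc {n : ℕ} {a b : ℤ} (ha : 0 ≤ a) {u : Fin n → ℤ}
    (hu : u ∈ piFinset fun _ => Icc a b) : 0 ≤ ∑ x, u x :=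
  sum_nonneg fun x _ => ha.trans (mem_Icc.1 (mem_piFinset.1 hu x)).1

theorem Int.toNat_sub_ediv_eq_iff {d i s : ℤ} (hd : 0 < d) (j : ℕ) :
    ((s ≤ i ∧ d ∣ i - s) ∧ ((i - s) / d).toNat = j) ↔ s = i - j * d := by
  constructor
  · rintro ⟨⟨hsi, q, hq⟩, hj⟩
    have hq₀ : 0 ≤ q := by nlinarith
    rw [hq, Int.mul_ediv_cancel_left q hd.ne'] at hj
    obtain rfl : q = j := by omega
    linarith
  · rintro rfl
    have hj : i - (i - j * d) = d * j := by ring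
    refine ⟨⟨by nlinarith, hj ▸ dvd_mul_right _ _⟩, ?_⟩
    rw [hj, Int.mul_ediv_cancel_left _ hd.ne', Int.toNat_natCast]

theorem Int.dvd_sub_iff_emod_eq {d i x : ℤ} (hx₀ : 0 ≤ x) (hxd : x < d) :
    d ∣ i - x ↔ i % d = x := by
  rw [← Int.modEq_iff_dvd, Int.ModEq, Int.emod_eq_of_lt hx₀ hxd, eq_comm]

theorem Int.emod_mem_Icc_of_not_dvd {d i : ℤ} (hd : 0 < d) (hi : ¬ d ∣ i) :
    i % d ∈ Icc 1 (d - 1) := by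
  have := Int.emod_lt_of_pos i hd
  have := Int.emod_nonneg i hd.ne'
  have : i % d ≠ 0 := mt Int.dvd_of_emod_eq_zero hi
  rw [mem_Icc]
  omega

theorem Int.sub_emod_le_sub_emod {d i k : ℤ} (hd : 0 < d) (hik : i ≤ k) :
    i - i % d ≤ k - k % d := by
  rw [Int.emod_def, Int.emod_def, sub_sub_cancel, sub_sub_cancel]
  exact mul_le_mul_of_nonneg_left (Int.ediv_le_ediv hd hik) hd.le

theorem Hsum_eq_card (n d : ℕ) (hd : 0 < d) (i : ℤ) :
    Hsum n d i = #{u ∈ piFinset fun _ : Fin n => Icc (1 : ℤ) (d - 1) |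
      ∑ a, u a ≤ i ∧ (d : ℤ) ∣ i - ∑ a, u a} := by
  have hd' : (0 : ℤ) < d := by exact_mod_cast hd
  unfold Hsum
  split_ifs with hi
  · refine (Nat.cast_eq_zero.2 (card_eq_zero.2 (filter_eq_empty_iff.2 fun u hu h => ?_))).symm
    linarith [sum_nonneg_of_mem_piFinset_Icc zero_le_one hu, h.1]
  · rw [card_eq_sum_card_fiberwise (f := fun u => ((i - ∑ a, u a) / d).toNat)
      (t := range ((i / d).toNat + 1)) ?maps]
    case maps =>
      intro u hu
      simp only [coe_filter, Set.mem_ofPred_eq, coe_range, Set.mem_Iio] at hu ⊢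
      have := Int.ediv_le_ediv hd' (show i - ∑ a, u a ≤ i by
        linarith [sum_nonneg_of_mem_piFinset_Icc zero_le_one hu.1])
      omega
    push_cast
    refine sum_congr rfl fun j _ => ?_
    unfold hodge
    rw [filter_filter, filter_congr fun u _ => Int.toNat_sub_ediv_eq_iff hd' j]

theorem Hsum_zero (d : ℕ) (hd : 0 < d) (i : ℤ) :
    Hsum 0 d i = if 0 ≤ i ∧ (d : ℤ) ∣ i then 1 else 0 := by
  rw [Hsum_eq_card 0 d hd]
  split_ifs with h <;> simp [h]

theorem Hsum_succ (n d : ℕ) (hd : 0 < d) (i : ℤ) :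
    Hsum (n + 1) d i = ∑ x ∈ Icc (1 : ℤ) (d - 1), Hsum n d (i - x) := by
  simp only [Hsum_eq_card _ d hd, card_filter_piFinset_const_succ, Fin.sum_cons]
  push_cast
  refine sum_congr rfl fun x _ => ?_
  simp only [le_sub_iff_add_le', sub_add_eq_sub_sub]

def cycleShift (r r' : ℤ) : Equiv.Perm ℤ where
  toFun x := if x = r then r' else if r < x ∧ x ≤ r' then x - 1
    else if r' ≤ x ∧ x < r then x + 1 else x
  invFun y := if y = r' then r else if r ≤ y ∧ y < r' then y + 1
    else if r' < y ∧ y ≤ r then y - 1 else y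
  left_inv x := by dsimp only; split_ifs <;> omega
  right_inv y := by dsimp only; split_ifs <;> omega

theorem cycleShift_apply (r r' x : ℤ) : cycleShift r r' x = if x = r then r' else
    if r < x ∧ x ≤ r' then x - 1 else if r' ≤ x ∧ x < r then x + 1 else x := rfl

theorem cycleShift_apply_self (r r' : ℤ) : cycleShift r r' r = r' := by
  simp [cycleShift_apply]

theorem cycleShift_mem_Icc_iff {a b r r' x : ℤ} (hr : r ∈ Icc a b) (hr' : r' ∈ Icc a b) :
    cycleShift r r' x ∈ Icc a b ↔ x ∈ Icc a b := by
  simp only [mem_Icc, cycleShift_apply] at *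
  split_ifs <;> omega

theorem cycleShift_le_add_one {r r' x : ℤ} (hx : x ≠ r) : cycleShift r r' x ≤ x + 1 := by
  rw [cycleShift_apply]
  split_ifs <;> omega

theorem cycleShift_le_self {r r' x : ℤ} (hrr' : r ≤ r') (hx : x ≠ r) :
    cycleShift r r' x ≤ x := by
  rw [cycleShift_apply]
  split_ifs <;> omega

section WindowSum

variable {d : ℤ} {f : ℤ → ℤ}

theorem monotoneOn_dvd_sum_Icc (hf : MonotoneOn f {i | ¬ d ∣ i}) :
    MonotoneOn (fun i => ∑ x ∈ Icc 1 (d - 1), f (i - x)) {i | d ∣ i} := by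
  intro i hi k hk hik
  refine sum_le_sum fun x hx => hf ?_ ?_ (by omega)
  all_goals
    rw [mem_Icc] at hx
    exact fun h => (Int.le_of_dvd (by omega) ((dvd_sub_right ‹_›).1 h)).not_gt (by omega)

theorem monotoneOn_not_dvd_sum_Icc (hd : 0 < d) (hf₀ : MonotoneOn f {i | d ∣ i})
    (hf₁ : MonotoneOn f {i | ¬ d ∣ i}) :
    MonotoneOn (fun i => ∑ x ∈ Icc 1 (d - 1), f (i - x)) {i | ¬ d ∣ i} := by
  intro i hi k hk hik
  have hr := Int.emod_mem_Icc_of_not_dvd hd hi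
  have hr' := Int.emod_mem_Icc_of_not_dvd hd hk
  let e := cycleShift (i % d) (k % d)
  calc ∑ x ∈ Icc 1 (d - 1), f (i - x) ≤ ∑ x ∈ Icc 1 (d - 1), f (k - e x) := by
        refine sum_le_sum fun x hx => ?_
        have hex : e x ∈ Icc 1 (d - 1) := (cycleShift_mem_Icc_iff hr hr').2 hx
        rw [mem_Icc] at hr hr' hx hex
        by_cases hxr : x = i % d
        · rw [hxr, cycleShift_apply_self]
          exact hf₀ ((Int.dvd_sub_iff_emod_eq (by omega) (by omega)).2 rfl)
            ((Int.dvd_sub_iff_emod_eq (by omega) (by omega)).2 rfl)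
            (Int.sub_emod_le_sub_emod hd hik)
        have hexr : e x ≠ k % d := fun h =>
          hxr (e.injective (h.trans (cycleShift_apply_self _ _).symm))
        refine hf₁ (mt (Int.dvd_sub_iff_emod_eq (by omega) (by omega)).1 (Ne.symm hxr))
          (mt (Int.dvd_sub_iff_emod_eq (by omega) (by omega)).1 (Ne.symm hexr)) ?_
        rcases le_or_gt (i % d) (k % d) with hle | hlt
        · have : e x ≤ x := cycleShift_le_self hle hxr
          omega
        · have hik' : i ≠ k := by rintro rfl; omega
          have : e x ≤ x + 1 := cycleShift_le_add_one hxr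
          omega
    _ = ∑ y ∈ Icc 1 (d - 1), f (k - y) :=
        sum_equiv e (fun x => (cycleShift_mem_Icc_iff hr hr').symm) fun _ _ => rfl

end WindowSum

theorem Hsum_monotoneOn (n d : ℕ) (hd : 0 < d) :
    MonotoneOn (Hsum n d) {i | (d : ℤ) ∣ i} ∧ MonotoneOn (Hsum n d) {i | ¬ (d : ℤ) ∣ i} := by
  induction n with
  | zero =>
    simp only [funext (Hsum_zero d hd)]
    constructor
    · intro i hi k hk hik
      simp only [Set.mem_ofPred_eq] at hi hk
      simp only [hi, hk, and_true]
      split_ifs <;> omega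
    · intro i hi k hk _
      simp_all
  | succ n ih =>
    rw [funext (Hsum_succ n d hd)]
    exact ⟨monotoneOn_dvd_sum_Icc ih.2, monotoneOn_not_dvd_sum_Icc (by exact_mod_cast hd) ih.1 ih.2⟩

theorem Hsum_mono_general (n d : ℕ) (hd : 2 ≤ d) (i k : ℤ) (hik : i ≤ k)
    (hi : ¬ (d : ℤ) ∣ i) (hkd : ¬ (d : ℤ) ∣ k) :
    Hsum n d i ≤ Hsum n d k :=
  (Hsum_monotoneOn n d (by omega)).2 hi hkd hik

/-- Monotonicity of basic arithmetic Hodge sums: `H_i ≤ H_k` for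
`0 ≤ i ≤ k ≤ nd` with `d ∤ i` and `d ∤ k`. -/
theorem Hsum_mono (n d : ℕ) (hn : 1 ≤ n) (hd : 2 ≤ d) (i k : ℤ)
    (hi0 : 0 ≤ i) (hik : i ≤ k) (hk : k ≤ (n : ℤ) * d)
    (hi : ¬ (d : ℤ) ∣ i) (hkd : ¬ (d : ℤ) ∣ k) :
    Hsum n d i ≤ Hsum n d k :=
  Hsum_mono_general n d hd i k hik hi hkd
end

section
/- Let n ≥ 1, d ≥ 2 be integers and p a prime with gcd(p,d) = 1. For every integer j with 0 ≤ j ≤ nd such that (p−1)·j ≢ 0 (mod d), the Frobenius numbers satisfy the symmetry h_{nd−j,1} = h_{j,0} and h_{nd−j,0} = h_{j,1}. -/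
open Finset

noncomputable def hodgeCube (n d : ℕ) : Finset (Fin n → ℤ) :=
  Fintype.piFinset fun _ => Icc 1 ((d : ℤ) - 1)

noncomputable def residueCount (n d : ℕ) (r : ZMod d) : ℕ :=
  #{u ∈ hodgeCube n d | ((∑ k, u k : ℤ) : ZMod d) = r}

section

variable {n d : ℕ}

@[simp]
lemma mem_hodgeCube {u : Fin n → ℤ} : u ∈ hodgeCube n d ↔ ∀ k, 1 ≤ u k ∧ u k ≤ d - 1 := by
  simp [hodgeCube]

lemma hodge_eq_card (j : ℤ) : hodge n d j = #{u ∈ hodgeCube n d | ∑ k, u k = j} := rfl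

lemma sum_nonneg_of_mem_hodgeCube {u : Fin n → ℤ} (hu : u ∈ hodgeCube n d) : 0 ≤ ∑ k, u k :=
  sum_nonneg fun k _ => by linarith [(mem_hodgeCube.1 hu k).1]

lemma Hsum_eq_card_s8 [NeZero d] (i : ℤ) :
    Hsum n d i = #{u ∈ hodgeCube n d | ((∑ k, u k : ℤ) : ZMod d) = i ∧ ∑ k, u k ≤ i} := by
  have hd : (0 : ℤ) < d := by exact_mod_cast NeZero.pos d
  rw [Hsum]
  split_ifs with hi
  · symm
    exact_mod_cast card_eq_zero.2 <| filter_eq_empty_iff.2 fun u hu h =>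
      by linarith [h.2, sum_nonneg_of_mem_hodgeCube hu]
  have hfib : #{u ∈ hodgeCube n d | ((∑ k, u k : ℤ) : ZMod d) = i ∧ ∑ k, u k ≤ i} =
      ∑ j ∈ range ((i / d).toNat + 1), #{u ∈ hodgeCube n d | ∑ k, u k = i - j * d} := by
    rw [← card_biUnion]
    · congr 1
      ext u
      simp only [mem_filter, mem_biUnion, mem_range, ZMod.intCast_eq_intCast_iff_dvd_sub]
      constructor
      · rintro ⟨hu, ⟨c, hc⟩, hle⟩
        have hc0 : 0 ≤ c := by nlinarith
        have hci : c ≤ i / d := Int.le_ediv_of_mul_le hd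
          (by linarith [sum_nonneg_of_mem_hodgeCube hu, mul_comm (d : ℤ) c])
        exact ⟨c.toNat, by omega, hu, by rw [Int.toNat_of_nonneg hc0]; linarith⟩
      · rintro ⟨j, -, hu, hj⟩
        exact ⟨hu, ⟨j, by rw [hj]; ring⟩, by rw [hj]; nlinarith⟩
    · intro j₁ _ j₂ _ hne
      refine disjoint_filter.2 fun u _ h₁ h₂ => hne ?_
      have : (j₁ : ℤ) * d = j₂ * d := by linarith
      exact_mod_cast mul_right_cancel₀ hd.ne' this
  simp only [hfib, hodge_eq_card, Nat.cast_sum]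

lemma card_filter_hodgeCube_reflect (P : ℤ → Prop) [DecidablePred P] :
    #{u ∈ hodgeCube n d | P (∑ k, u k)} = #{u ∈ hodgeCube n d | P (n * d - ∑ k, u k)} := by
  have hsum (u : Fin n → ℤ) : ∑ k, ((d : ℤ) - u k) = n * d - ∑ k, u k := by
    simp [sum_sub_distrib]
  refine card_nbij' (fun u k => d - u k) (fun u k => d - u k) ?_ ?_ ?_ ?_ <;> intro u hu
  iterate 2
    simp only [coe_filter, Set.mem_ofPred_eq, mem_hodgeCube] at hu ⊢
    exact ⟨fun k => ⟨by linarith [hu.1 k], by linarith [hu.1 k]⟩, by simpa [hsum] using hu.2⟩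
  all_goals funext k; ring

lemma Hsum_add_Hsum_reflect [NeZero d] (i : ℤ) :
    Hsum n d i + Hsum n d (n * d - d - i) = residueCount n d i := by
  rw [Hsum_eq_card_s8, Hsum_eq_card_s8, ← Nat.cast_add, Nat.cast_inj, residueCount,
    ← card_filter_add_card_filter_not (s := {u ∈ hodgeCube n d | ((∑ k, u k : ℤ) : ZMod d) = i})
      (fun u => ∑ k, u k ≤ i), filter_filter, filter_filter, card_filter_hodgeCube_reflect
      (fun x : ℤ => (x : ZMod d) = ((n * d - d - i : ℤ) : ZMod d) ∧ x ≤ n * d - d - i)]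
  congr 2
  refine filter_congr fun u _ => ?_
  have hd : (0 : ℤ) < d := by exact_mod_cast NeZero.pos d
  simp only [ZMod.intCast_eq_intCast_iff_dvd_sub]
  constructor
  · rintro ⟨⟨c, hc⟩, hle⟩
    exact ⟨⟨-1 - c, by linarith⟩, by linarith⟩
  · rintro ⟨⟨c, hc⟩, hlt⟩
    have hneg : c < 0 := by nlinarith
    exact ⟨⟨-1 - c, by linarith⟩, by nlinarith⟩

lemma residueCount_eq_card_zmod [NeZero d] (r : ZMod d) :
    residueCount n d r = #{v : Fin n → ZMod d | (∀ k, v k ≠ 0) ∧ ∑ k, v k = r} := by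
  refine card_nbij' (fun u k => (u k : ZMod d)) (fun v k => ((v k).val : ℤ)) ?_ ?_ ?_ ?_
  · intro u hu
    simp only [coe_filter, Set.mem_ofPred_eq, mem_hodgeCube, mem_univ, true_and,
      Int.cast_sum] at hu ⊢
    refine ⟨fun k h => ?_, hu.2⟩
    rw [ZMod.intCast_zmod_eq_zero_iff_dvd] at h
    have := Int.le_of_dvd (by linarith [hu.1 k]) h
    linarith [hu.1 k]
  · intro v hv
    simp only [coe_filter, Set.mem_ofPred_eq, mem_hodgeCube, mem_univ, true_and] at hv ⊢
    refine ⟨fun k => ⟨?_, ?_⟩, ?_⟩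
    · exact_mod_cast ZMod.val_pos.2 (hv.1 k)
    · have := ZMod.val_lt (v k); omega
    · simpa using hv.2
  · intro u hu
    simp only [coe_filter, Set.mem_ofPred_eq, mem_hodgeCube] at hu
    funext k
    dsimp only
    rw [ZMod.val_intCast, Int.emod_eq_of_lt] <;> linarith [hu.1 k]
  · intro v _
    funext k
    simp

lemma residueCount_units_mul [NeZero d] (a : (ZMod d)ˣ) (r : ZMod d) :
    residueCount n d (a * r) = residueCount n d r := by
  rw [residueCount_eq_card_zmod, residueCount_eq_card_zmod]
  refine card_nbij' (fun v k => a⁻¹ * v k) (fun v k => a * v k) ?_ ?_ ?_ ?_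
  · intro v hv
    simp only [coe_filter, Set.mem_ofPred_eq, mem_univ, true_and] at hv ⊢
    refine ⟨fun k => by simpa using hv.1 k, by rw [← mul_sum, hv.2, Units.inv_mul_cancel_left]⟩
  · intro v hv
    simp only [coe_filter, Set.mem_ofPred_eq, mem_univ, true_and] at hv ⊢
    refine ⟨fun k => by simpa using hv.1 k, by rw [← mul_sum, hv.2]⟩
  all_goals intro v _; funext k; simp

end

lemma sigma_add_sigma_compl {n d p : ℕ} (hpd : Nat.Coprime p d) {j s s' : ℤ}
    (hndvd : ¬ (d : ℤ) ∣ (p - 1) * j) (hs1 : 1 ≤ s) (hs2 : s ≤ d)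
    (hs : (d : ℤ) ∣ p * s - (p - 1) * j) (hs'1 : 1 ≤ s') (hs'2 : s' ≤ d)
    (hs' : (d : ℤ) ∣ p * s' - (p - 1) * (n * d - j)) : s + s' = d := by
  have hdvd : (d : ℤ) ∣ s + s' := by
    refine (Nat.isCoprime_iff_coprime.2 hpd).symm.dvd_of_dvd_mul_left ?_
    have : (p : ℤ) * (s + s') =
        (p * s - (p - 1) * j) + (p * s' - (p - 1) * (n * d - j)) + d * ((p - 1) * n) := by ring
    exact this ▸ (hs.add hs').add (dvd_mul_right _ _)
  obtain ⟨c, hc⟩ := hdvd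
  have hc1 : 1 ≤ c := by nlinarith
  have hc2 : c ≤ 2 := by nlinarith
  obtain rfl | rfl : c = 1 ∨ c = 2 := by omega
  · linarith
  · have hsd : s = d := by linarith
    obtain ⟨q, hq⟩ := hs
    exact (hndvd ⟨p - q, by linear_combination -hq + (p : ℤ) * hsd⟩).elim

/-- Here `s` is `σ_j(0)` and `s'` is `σ_{nd−j}(0)`. -/
theorem frobenius_numbers_symm_general (n d p : ℕ) (hpd : Nat.gcd p d = 1) (j : ℤ)
    (hndvd : ¬ (d : ℤ) ∣ ((p : ℤ) - 1) * j)
    (s : ℤ) (hs1 : 1 ≤ s) (hs2 : s ≤ d)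
    (hs : (d : ℤ) ∣ (p : ℤ) * s - ((p : ℤ) - 1) * j)
    (s' : ℤ) (hs'1 : 1 ≤ s') (hs'2 : s' ≤ d)
    (hs' : (d : ℤ) ∣ (p : ℤ) * s' - ((p : ℤ) - 1) * ((n : ℤ) * d - j)) :
    Hsum n d ((n : ℤ) * d - j - s') - Hsum n d ((n : ℤ) * d - j - d)
        = Hsum n d j - Hsum n d (j - s) ∧
      Hsum n d ((n : ℤ) * d - j) - Hsum n d ((n : ℤ) * d - j - s')
        = Hsum n d (j - s) - Hsum n d (j - d) := by
  have : NeZero d := ⟨by rintro rfl; omega⟩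
  have hss' : s + s' = d := sigma_add_sigma_compl hpd hndvd hs1 hs2 hs hs'1 hs'2 hs'
  have hres_s : residueCount n d ((j - s : ℤ) : ZMod d) = residueCount n d j := by
    rw [← residueCount_units_mul (ZMod.unitOfCoprime p hpd), ZMod.coe_unitOfCoprime]
    have := (ZMod.intCast_zmod_eq_zero_iff_dvd _ _).2 hs
    push_cast at this ⊢
    congr 1
    linear_combination -this
  have hres_d : residueCount n d ((j - d : ℤ) : ZMod d) = residueCount n d j := by simp
  have E₁ := Hsum_add_Hsum_reflect (n := n) (d := d) (j - s)
  have E₂ := Hsum_add_Hsum_reflect (n := n) (d := d) j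
  have E₃ := Hsum_add_Hsum_reflect (n := n) (d := d) (j - d)
  rw [show (n : ℤ) * d - d - (j - s) = n * d - j - s' by linarith, hres_s] at E₁
  rw [show (n : ℤ) * d - d - j = n * d - j - d by ring] at E₂
  rw [show (n : ℤ) * d - d - (j - d) = n * d - j by ring, hres_d] at E₃
  constructor <;> linarith

/-- Symmetry of Frobenius numbers: if `(p−1)·j ≢ 0 (mod d)`, then
`h_{nd−j,1} = h_{j,0}` and `h_{nd−j,0} = h_{j,1}`.  Here `s` plays the role of
`σ_j(0)` (the unique element of `{1,…,d}` with `p·s ≡ (p−1)·j (mod d)`) and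
`s'` plays the role of `σ_{nd−j}(0)`. -/
theorem frobenius_numbers_symm (n d p : ℕ) (hn : 1 ≤ n) (hd : 2 ≤ d)
    (hp : p.Prime) (hpd : Nat.gcd p d = 1) (j : ℤ)
    (hj0 : 0 ≤ j) (hj1 : j ≤ (n : ℤ) * d)
    (hndvd : ¬ (d : ℤ) ∣ ((p : ℤ) - 1) * j)
    (s : ℤ) (hs1 : 1 ≤ s) (hs2 : s ≤ d)
    (hs : (d : ℤ) ∣ (p : ℤ) * s - ((p : ℤ) - 1) * j)
    (s' : ℤ) (hs'1 : 1 ≤ s') (hs'2 : s' ≤ d)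
    (hs' : (d : ℤ) ∣ (p : ℤ) * s' - ((p : ℤ) - 1) * ((n : ℤ) * d - j)) :
    Hsum n d ((n : ℤ) * d - j - s') - Hsum n d ((n : ℤ) * d - j - d)
        = Hsum n d j - Hsum n d (j - s) ∧
      Hsum n d ((n : ℤ) * d - j) - Hsum n d ((n : ℤ) * d - j - s')
        = Hsum n d (j - s) - Hsum n d (j - d) :=
  frobenius_numbers_symm_general n d p hpd j hndvd s hs1 hs2 hs s' hs'1 hs'2 hs'
end
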